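/- Let X ∈ M₃(ℂ) be Hermitian and set μ = (1/3)·(Re tr(X) − (3/2)·√(λ₁²·(Re tr(X J₁))² + λ₂²·(Re tr(X J₂))² + λ₃²·(Re tr(X J₃))²)). Then Φ(X) − μ·I₃ is positive semidefinite and μ is an eigenvalue of Φ(X) (i.e., there exists a nonzero v ∈ ℂ³ with Φ(X)·v = μ·v); that is, μ is the minimal eigenvalue of Φ(X). -/

import Mathlib

open Matrix Kronecker
open scoped ComplexOrder

/-- The spin-1 angular momentum matrix J₁. -/
noncomputable def spinOneJ1 : Matrix (Fin 3) (Fin 3) ℂ :=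
  ((1 / Real.sqrt 2 : ℝ) : ℂ) • !![0, 1, 0; 1, 0, 1; 0, 1, 0]

/-- The spin-1 angular momentum matrix J₂. -/
noncomputable def spinOneJ2 : Matrix (Fin 3) (Fin 3) ℂ :=
  ((1 / Real.sqrt 2 : ℝ) : ℂ) • !![0, -Complex.I, 0; Complex.I, 0, -Complex.I; 0, Complex.I, 0]

/-- The spin-1 angular momentum matrix J₃. -/
def spinOneJ3 : Matrix (Fin 3) (Fin 3) ℂ := !![1, 0, 0; 0, 0, 0; 0, 0, -1]

/-- The spin-1 polarization-scaling map
`Φ(X) = (1/3)·tr(X)·I₃ + (1/2)·Σᵢ λᵢ·tr(X Jᵢ)·Jᵢ`. -/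
noncomputable def Phi3 (l1 l2 l3 : ℝ) (X : Matrix (Fin 3) (Fin 3) ℂ) :
    Matrix (Fin 3) (Fin 3) ℂ :=
  (1 / 3 : ℂ) • X.trace • (1 : Matrix (Fin 3) (Fin 3) ℂ) +
    (1 / 2 : ℂ) • ((l1 : ℂ) • (X * spinOneJ1).trace • spinOneJ1 +
      (l2 : ℂ) • (X * spinOneJ2).trace • spinOneJ2 +
      (l3 : ℂ) • (X * spinOneJ3).trace • spinOneJ3)

/-!
For Hermitian `X` the numbers `tr(X Jᵢ)` are real, so `Φ(X) = (tr X / 3) I + S / 2` with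
`S = a J₁ + b J₂ + c J₃` Hermitian, `(a, b, c) = (λᵢ tr(X Jᵢ))ᵢ`. Put `r = √(a² + b² + c²)`.
The spin-1 operator satisfies `S² = r² I - g gᴴ` for an explicit vector `g`, hence
`2r (r I + S) = (r I + S)ᴴ (r I + S) + g gᴴ` is positive semidefinite, while
`det (r I + S) = r (r² - (a² + b² + c²)) = 0` gives a kernel vector: `-r` is the least
eigenvalue of `S`.
-/

namespace Matrix

variable {n : Type*} [Fintype n]

lemma IsHermitian.ofReal_re_trace {A : Matrix n n ℂ} (hA : A.IsHermitian) :
    (A.trace.re : ℂ) = A.trace := by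
  refine Complex.conj_eq_iff_re.mp ?_
  rw [← Complex.star_def, ← trace_conjTranspose, hA.eq]

lemma IsHermitian.ofReal_re_trace_mul {A B : Matrix n n ℂ} (hA : A.IsHermitian)
    (hB : B.IsHermitian) : ((A * B).trace.re : ℂ) = (A * B).trace := by
  refine Complex.conj_eq_iff_re.mp ?_
  rw [← Complex.star_def, ← trace_conjTranspose, conjTranspose_mul, hA.eq, hB.eq, trace_mul_comm]

lemma posSemidef_smul_one_add_of_mul_self_eq [DecidableEq n] {S P : Matrix n n ℂ} {r : ℝ}
    (hS : S.IsHermitian) (hP : P.PosSemidef) (hr : 0 < r)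
    (h : S * S = ((r ^ 2 : ℝ) : ℂ) • 1 - P) : ((r : ℂ) • 1 + S).PosSemidef := by
  set N := (r : ℂ) • (1 : Matrix n n ℂ) + S
  have hN : Nᴴ * N + P = (2 * r) • N := by
    simp only [N, conjTranspose_add, conjTranspose_smul, conjTranspose_one, hS.eq,
      Complex.star_def, Complex.conj_ofReal, add_mul, mul_add, smul_mul_assoc, mul_smul_comm,
      one_mul, mul_one, h]
    push_cast
    module
  rw [← inv_smul_smul₀ (by positivity : 2 * r ≠ 0) N, ← hN]
  exact ((posSemidef_conjTranspose_mul_self N).add hP).smul (by positivity)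

end Matrix

lemma isHermitian_spinOneJ1 : spinOneJ1.IsHermitian := by
  ext i j; fin_cases i <;> fin_cases j <;> simp [spinOneJ1, conjTranspose_apply]

lemma isHermitian_spinOneJ2 : spinOneJ2.IsHermitian := by
  ext i j; fin_cases i <;> fin_cases j <;> simp [spinOneJ2, conjTranspose_apply]

lemma isHermitian_spinOneJ3 : spinOneJ3.IsHermitian := by
  ext i j; fin_cases i <;> fin_cases j <;> simp [spinOneJ3, conjTranspose_apply]

noncomputable def spinOneAlong (a b c : ℝ) : Matrix (Fin 3) (Fin 3) ℂ :=
  (a : ℂ) • spinOneJ1 + (b : ℂ) • spinOneJ2 + (c : ℂ) • spinOneJ3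

lemma isHermitian_spinOneAlong (a b c : ℝ) : (spinOneAlong a b c).IsHermitian :=
  ((isHermitian_spinOneJ1.smul (Complex.conj_ofReal a)).add
    (isHermitian_spinOneJ2.smul (Complex.conj_ofReal b))).add
    (isHermitian_spinOneJ3.smul (Complex.conj_ofReal c))

lemma spinOneAlong_eq (a b c : ℝ) :
    spinOneAlong a b c =
      let q : ℂ := ((1 / Real.sqrt 2 : ℝ) : ℂ)
      !![(c : ℂ), q * (a - b * Complex.I), 0;
        q * (a + b * Complex.I), 0, q * (a - b * Complex.I);
        0, q * (a + b * Complex.I), -c] := by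
  ext i j; fin_cases i <;> fin_cases j <;>
    simp [spinOneAlong, spinOneJ1, spinOneJ2, spinOneJ3] <;> ring

lemma inv_ofReal_sqrt_two_sq : ((Real.sqrt 2 : ℂ))⁻¹ ^ 2 = 1 / 2 := by
  rw [← Complex.ofReal_inv, ← Complex.ofReal_pow]
  norm_num

/-- Spans the kernel of `spinOneAlong a b c`; its norm is `√(a² + b² + c²)`. -/
noncomputable def spinOneNullVector (a b c : ℝ) : Fin 3 → ℂ :=
  ![-((1 / Real.sqrt 2 : ℝ) : ℂ) * (a - b * Complex.I), c,
    ((1 / Real.sqrt 2 : ℝ) : ℂ) * (a + b * Complex.I)]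

lemma spinOneAlong_mul_self (a b c : ℝ) :
    spinOneAlong a b c * spinOneAlong a b c =
      ((a ^ 2 + b ^ 2 + c ^ 2 : ℝ) : ℂ) • 1 -
        vecMulVec (spinOneNullVector a b c) (star (spinOneNullVector a b c)) := by
  have hq := inv_ofReal_sqrt_two_sq
  have hI := Complex.I_sq
  rw [spinOneAlong_eq]
  ext i j; fin_cases i <;> fin_cases j <;>
    simp only [Matrix.sub_apply, Matrix.smul_apply, vecMulVec_apply, one_apply, mul_apply,
      Fin.sum_univ_three] <;>
    simp [spinOneNullVector] <;> grind

lemma det_smul_one_add_spinOneAlong (r a b c : ℝ) :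
    ((r : ℂ) • 1 + spinOneAlong a b c).det =
      ((r * (r ^ 2 - (a ^ 2 + b ^ 2 + c ^ 2)) : ℝ) : ℂ) := by
  have hq := inv_ofReal_sqrt_two_sq
  have hI := Complex.I_sq
  rw [spinOneAlong_eq, det_fin_three]
  simp only [Complex.coe_smul, one_div, Complex.ofReal_inv, Fin.isValue, Matrix.add_apply,
    Matrix.smul_apply, one_apply_eq, Complex.real_smul, mul_one, of_apply, cons_val',
    cons_val_zero, cons_val_fin_one, cons_val_one, add_zero, cons_val, ne_eq, Fin.reduceEq,
    not_false_eq_true, one_apply_ne, smul_zero, zero_add, zero_ne_one, one_ne_zero, mul_zero,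
    zero_mul, sub_zero, Complex.ofReal_mul, Complex.ofReal_sub, Complex.ofReal_pow,
    Complex.ofReal_add]
  grind

lemma posSemidef_smul_one_add_spinOneAlong (a b c : ℝ) :
    ((Real.sqrt (a ^ 2 + b ^ 2 + c ^ 2) : ℂ) • 1 + spinOneAlong a b c).PosSemidef := by
  obtain hr | hr := (Real.sqrt_nonneg (a ^ 2 + b ^ 2 + c ^ 2)).eq_or_lt
  · have h0 : a ^ 2 + b ^ 2 + c ^ 2 = 0 := by
      rwa [eq_comm, Real.sqrt_eq_zero (by positivity)] at hr
    obtain ⟨rfl, rfl, rfl⟩ : a = 0 ∧ b = 0 ∧ c = 0 := by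
      refine ⟨?_, ?_, ?_⟩ <;> nlinarith [sq_nonneg a, sq_nonneg b, sq_nonneg c]
    simpa [spinOneAlong] using PosSemidef.zero
  · refine posSemidef_smul_one_add_of_mul_self_eq (isHermitian_spinOneAlong a b c)
      (posSemidef_vecMulVec_self_star (spinOneNullVector a b c)) hr ?_
    rw [spinOneAlong_mul_self, Real.sq_sqrt (by positivity)]

lemma exists_mulVec_smul_one_add_spinOneAlong_eq_zero (a b c : ℝ) :
    ∃ v ≠ 0, ((Real.sqrt (a ^ 2 + b ^ 2 + c ^ 2) : ℂ) • 1 + spinOneAlong a b c) *ᵥ v = 0 := by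
  rw [exists_mulVec_eq_zero_iff, det_smul_one_add_spinOneAlong, Real.sq_sqrt (by positivity)]
  simp

lemma Phi3_eq_of_isHermitian (l1 l2 l3 : ℝ) {X : Matrix (Fin 3) (Fin 3) ℂ} (hX : X.IsHermitian) :
    Phi3 l1 l2 l3 X = ((X.trace.re / 3 : ℝ) : ℂ) • 1 + (1 / 2 : ℂ) • spinOneAlong
      (l1 * (X * spinOneJ1).trace.re) (l2 * (X * spinOneJ2).trace.re)
      (l3 * (X * spinOneJ3).trace.re) := by
  rw [Phi3, ← hX.ofReal_re_trace, ← hX.ofReal_re_trace_mul isHermitian_spinOneJ1,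
    ← hX.ofReal_re_trace_mul isHermitian_spinOneJ2, ← hX.ofReal_re_trace_mul isHermitian_spinOneJ3,
    spinOneAlong]
  push_cast
  module

theorem minimal_eigenvalue_of_spin_one_map (l1 l2 l3 : ℝ)
    (X : Matrix (Fin 3) (Fin 3) ℂ) (hX : X.IsHermitian)
    (mu : ℝ)
    (hmu : mu = (1 / 3) * (X.trace.re -
      (3 / 2) * Real.sqrt (l1 ^ 2 * ((X * spinOneJ1).trace.re) ^ 2 +
        l2 ^ 2 * ((X * spinOneJ2).trace.re) ^ 2 +
        l3 ^ 2 * ((X * spinOneJ3).trace.re) ^ 2))) :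
    (Phi3 l1 l2 l3 X - (mu : ℂ) • (1 : Matrix (Fin 3) (Fin 3) ℂ)).PosSemidef ∧
    ∃ v : Fin 3 → ℂ, v ≠ 0 ∧ Phi3 l1 l2 l3 X *ᵥ v = (mu : ℂ) • v := by
  set a := l1 * (X * spinOneJ1).trace.re
  set b := l2 * (X * spinOneJ2).trace.re
  set c := l3 * (X * spinOneJ3).trace.re
  set N := (Real.sqrt (a ^ 2 + b ^ 2 + c ^ 2) : ℂ) • 1 + spinOneAlong a b c
  have hmu_half : mu = X.trace.re / 3 - Real.sqrt (a ^ 2 + b ^ 2 + c ^ 2) / 2 := by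
    simp only [hmu, a, b, c, mul_pow]
    ring
  have hN : Phi3 l1 l2 l3 X - (mu : ℂ) • 1 = (1 / 2 : ℝ) • N := by
    rw [Phi3_eq_of_isHermitian l1 l2 l3 hX, hmu_half]
    push_cast
    module
  refine ⟨hN ▸ (posSemidef_smul_one_add_spinOneAlong a b c).smul (by norm_num), ?_⟩
  obtain ⟨v, hv, hNv⟩ := exists_mulVec_smul_one_add_spinOneAlong_eq_zero a b c
  refine ⟨v, hv, ?_⟩
  have hker : (Phi3 l1 l2 l3 X - (mu : ℂ) • 1) *ᵥ v = 0 := by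
    rw [hN, smul_mulVec, hNv, smul_zero]
  rwa [sub_mulVec, smul_mulVec, one_mulVec, sub_eq_zero] at hker
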